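/- Let K and E be nonempty finite types, let q : K × K → ℝ be nonnegative, and for each (a,b) let ρ_{a,b} be a positive semidefinite complex matrix indexed by E with trace 1. Then ‖Σ_{(a,b) : a ≠ b} q(a,b)·((Δ_a ⊗ Δ_b) − (Δ_a ⊗ Δ_a)) ⊗ ρ_{a,b}‖₁ = 2·Σ_{(a,b) : a ≠ b} q(a,b). (Equation (triangle2) in the proof of Proposition 1: the trace distance between the real key state and the state with Bob's key replaced by Alice's equals twice the probability that the keys differ.) -/

import Mathlib

/-!
The operator is `X = P - N`, where `P = ∑ q(a,b) |a b⟩⟨a b| ⊗ ρ_{a,b}` and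
`N = ∑ q(a,b) |a a⟩⟨a a| ⊗ ρ_{a,b}` are positive semidefinite. Since `a ≠ b`, no register value
`(a, b)` occurring in `P` equals a value `(c, c)` occurring in `N`, so `P N = N P = 0`. Hence
`Xᴴ X = (P + N)²`, so `√(Xᴴ X) = P + N` and `‖X‖₁ = tr P + tr N = 2 ∑ q(a,b)`.
-/

open scoped Kronecker ComplexOrder

/-- The trace norm `‖X‖₁ = tr √(Xᴴ X)` of a square complex matrix. -/
noncomputable def traceNorm {n : Type*} [Fintype n] [DecidableEq n] (X : Matrix n n ℂ) : ℝ :=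
  (((Matrix.posSemidef_conjTranspose_mul_self X).1.eigenvectorUnitary : Matrix n n ℂ) *
      Matrix.diagonal (((↑) : ℝ → ℂ) ∘ (√·) ∘ (Matrix.posSemidef_conjTranspose_mul_self X).1.eigenvalues) *
      (star (Matrix.posSemidef_conjTranspose_mul_self X).1.eigenvectorUnitary : Matrix n n ℂ)).trace.re

open Matrix

theorem Matrix.sub_kronecker {α l m n p : Type*} [Ring α] (A₁ A₂ : Matrix l m α)
    (B : Matrix n p α) : (A₁ - A₂) ⊗ₖ B = A₁ ⊗ₖ B - A₂ ⊗ₖ B := by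
  ext ⟨⟩ ⟨⟩
  simp [sub_mul]

theorem Matrix.posSemidef_single_one {m α : Type*} [DecidableEq m] [Ring α]
    [PartialOrder α] [StarRing α] [StarOrderedRing α] (i : m) :
    (single i i (1 : α)).PosSemidef := by
  rw [← diagonal_single]
  exact posSemidef_diagonal_iff.2 (Pi.single_nonneg.2 zero_le_one)

section traceNorm

variable {n : Type*} [Fintype n] [DecidableEq n]

open scoped MatrixOrder in
theorem traceNorm_eq_re_trace_of_mul_self_eq {X B : Matrix n n ℂ} (hB : B.PosSemidef)
    (h : B * B = Xᴴ * X) : traceNorm X = B.trace.re := by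
  have hXX := posSemidef_conjTranspose_mul_self X
  have hsqrt : CFC.sqrt (Xᴴ * X) = B := CFC.sqrt_unique h hB.nonneg
  rw [CFC.sqrt_eq_real_sqrt _ hXX.nonneg, cfcₙ_eq_cfc, hXX.1.cfc_eq, IsHermitian.cfc,
    Unitary.conjStarAlgAut_apply] at hsqrt
  rw [traceNorm, ← hsqrt]
  rfl

theorem traceNorm_sub_of_mul_eq_zero {P N : Matrix n n ℂ} (hP : P.PosSemidef)
    (hN : N.PosSemidef) (hPN : P * N = 0) : traceNorm (P - N) = (P.trace + N.trace).re := by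
  have hNP : N * P = 0 := by
    rw [← hN.1.eq, ← hP.1.eq, ← conjTranspose_mul, hPN, conjTranspose_zero]
  refine (traceNorm_eq_re_trace_of_mul_self_eq (hP.add hN) ?_).trans (by rw [trace_add])
  rw [conjTranspose_sub, hP.1.eq, hN.1.eq]
  simp only [add_mul, mul_add, sub_mul, mul_sub, hPN, hNP]
  abel

end traceNorm

section cqOperator

variable {ι R E : Type*} [DecidableEq R]

/-- The classical–quantum operator `∑ᵢ qᵢ |κᵢ⟩⟨κᵢ| ⊗ ρᵢ` on the register `R` and the system `E`. -/
noncomputable def cqOperator (s : Finset ι) (q : ι → ℝ) (κ : ι → R) (ρ : ι → Matrix E E ℂ) :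
    Matrix (R × E) (R × E) ℂ :=
  ∑ i ∈ s, (q i : ℂ) • (single (κ i) (κ i) 1 ⊗ₖ ρ i)

variable [Fintype R] [Fintype E] (s : Finset ι) (q : ι → ℝ) (κ : ι → R) (ρ : ι → Matrix E E ℂ)

theorem cqOperator_posSemidef (hq : ∀ i ∈ s, 0 ≤ q i) (hρ : ∀ i ∈ s, (ρ i).PosSemidef) :
    (cqOperator s q κ ρ).PosSemidef :=
  posSemidef_sum s fun i hi =>
    ((posSemidef_single_one (κ i)).kronecker (hρ i hi)).smul (Complex.zero_le_real.2 (hq i hi))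

theorem trace_cqOperator (hρ : ∀ i ∈ s, (ρ i).trace = 1) :
    (cqOperator s q κ ρ).trace = ∑ i ∈ s, (q i : ℂ) := by
  rw [cqOperator, trace_sum]
  refine Finset.sum_congr rfl fun i hi => ?_
  rw [trace_smul, trace_kronecker, trace_single_eq_same, hρ i hi, one_mul, smul_eq_mul, mul_one]

theorem cqOperator_mul_cqOperator_eq_zero (t : Finset ι) (q' : ι → ℝ) (κ' : ι → R)
    (ρ' : ι → Matrix E E ℂ) (h : ∀ i ∈ s, ∀ j ∈ t, κ i ≠ κ' j) :
    cqOperator s q κ ρ * cqOperator t q' κ' ρ' = 0 := by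
  rw [cqOperator, cqOperator, Finset.sum_mul_sum]
  refine Finset.sum_eq_zero fun i hi => Finset.sum_eq_zero fun j hj => ?_
  rw [smul_mul_smul_comm, ← mul_kronecker_mul, single_mul_single_of_ne _ _ _ _ (h i hi j hj),
    zero_kronecker, smul_zero]

end cqOperator

theorem statement2_general {K E : Type*} [Fintype K] [DecidableEq K]
    [Fintype E] [DecidableEq E]
    (q : K × K → ℝ) (hq : ∀ ab, 0 ≤ q ab)
    (ρ : K × K → Matrix E E ℂ)
    (hρ : ∀ ab, (ρ ab).PosSemidef) (hρtr : ∀ ab, (ρ ab).trace = 1) :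
    traceNorm
        (∑ ab ∈ Finset.univ.filter (fun ab : K × K => ab.1 ≠ ab.2),
          (q ab : ℂ) •
            ((Matrix.single ab.1 ab.1 (1 : ℂ) ⊗ₖ Matrix.single ab.2 ab.2 (1 : ℂ)
              - Matrix.single ab.1 ab.1 (1 : ℂ) ⊗ₖ Matrix.single ab.1 ab.1 (1 : ℂ))
              ⊗ₖ ρ ab))
      = 2 * ∑ ab ∈ Finset.univ.filter (fun ab : K × K => ab.1 ≠ ab.2), q ab := by
  set s := Finset.univ.filter (fun ab : K × K => ab.1 ≠ ab.2)
  have hX : ∑ ab ∈ s, (q ab : ℂ) •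
      ((single ab.1 ab.1 (1 : ℂ) ⊗ₖ single ab.2 ab.2 (1 : ℂ)
        - single ab.1 ab.1 (1 : ℂ) ⊗ₖ single ab.1 ab.1 (1 : ℂ)) ⊗ₖ ρ ab) =
      cqOperator s q id ρ - cqOperator s q (fun ab => (ab.1, ab.1)) ρ := by
    simp only [cqOperator, ← Finset.sum_sub_distrib, single_kronecker_single, sub_kronecker,
      smul_sub, mul_one, id]
  have horth : ∀ ab ∈ s, ∀ cd ∈ s, id ab ≠ (cd.1, cd.1) := by
    rintro ab hab cd - rfl
    exact (Finset.mem_filter.1 hab).2 rfl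
  have hpsd : ∀ κ : K × K → K × K, (cqOperator s q κ ρ).PosSemidef := fun κ =>
    cqOperator_posSemidef s q κ ρ (fun ab _ => hq ab) (fun ab _ => hρ ab)
  have htr : ∀ κ : K × K → K × K, (cqOperator s q κ ρ).trace = ∑ ab ∈ s, (q ab : ℂ) := fun κ =>
    trace_cqOperator s q κ ρ fun ab _ => hρtr ab
  rw [hX, traceNorm_sub_of_mul_eq_zero (hpsd _) (hpsd _)
    (cqOperator_mul_cqOperator_eq_zero s q _ ρ s q _ ρ horth), htr, htr]
  norm_cast
  ring

/-- **Equation (triangle2) in the proof of Proposition 1.** The trace distance between the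
real key state and the state with Bob's key replaced by Alice's equals twice the
probability that the keys differ. -/
theorem statement2 {K E : Type*} [Fintype K] [DecidableEq K] [Nonempty K]
    [Fintype E] [DecidableEq E] [Nonempty E]
    (q : K × K → ℝ) (hq : ∀ ab, 0 ≤ q ab)
    (ρ : K × K → Matrix E E ℂ)
    (hρ : ∀ ab, (ρ ab).PosSemidef) (hρtr : ∀ ab, (ρ ab).trace = 1) :
    traceNorm
        (∑ ab ∈ Finset.univ.filter (fun ab : K × K => ab.1 ≠ ab.2),
          (q ab : ℂ) •
            ((Matrix.single ab.1 ab.1 (1 : ℂ) ⊗ₖ Matrix.single ab.2 ab.2 (1 : ℂ)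
              - Matrix.single ab.1 ab.1 (1 : ℂ) ⊗ₖ Matrix.single ab.1 ab.1 (1 : ℂ))
              ⊗ₖ ρ ab))
      = 2 * ∑ ab ∈ Finset.univ.filter (fun ab : K × K => ab.1 ≠ ab.2), q ab :=
  statement2_general q hq ρ hρ hρtr
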